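/- Interchange of infimum and integral: for fixed π with L ∈ L¹(π) and bounded spectral function σ, the infimum over all Borel measurable β : [0,1) → ℝ of ∫_0^1 [β(u) + (1-u)^{-1} E_π[(L - β(u))_+]] dΓ_σ(u) equals ∫_0^1 inf_b [b + (1-u)^{-1} E_π[(L-b)_+]] dΓ_σ(u), which equals Γ_σ({0})·E_π[L] + ∫_{(0,1)} ES_{u,π}(L) dΓ_σ(u). Moreover, β achieves the infimum iff β(u) minimizes b ↦ b + (1-u)^{-1} E_π[(L-b)_+] for Γ_σ-a.e. u. -/

import Mathlib

/-!
Write `g u b = b + (1 - u)⁻¹ * E_π[(L - b)₊]`. For `u ∈ [0,1)` the infimum `ES u` of `g u` is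
squeezed between `E_π[L]` and `g u 0 = (1 - u)⁻¹ * E_π[L₊]`, so it is `Γ_σ`-integrable as soon as
`(1 - u)⁻¹` is. That holds because `dΓ_σ = (1 - u) dσ` away from `0`: on the dyadic block
`(1 - 2⁻ⁿ, 1 - 2⁻ⁿ⁻¹]` the weight `(1 - u)⁻¹` times the `Γ_σ`-mass is at most twice the
increment of `σ`, and these increments telescope to at most `2 sup σ`.

Since `g u` is continuous in `b` and `g` is measurable in `u`, choosing for each `u` the first
`ε`-optimal rational in a fixed enumeration of `ℚ` gives a measurable `ε`-minimiser; integrating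
yields the interchange of infimum and integral, and the minimiser characterisation is the equality
case of `∫ ES ≤ ∫ g u (β u)`. The atom at `0` contributes `E_π[L]`, because
`g 0 b = E_π[max L b] → E_π[L]` as `b → -∞`.
-/

open MeasureTheory Filter Set Topology

noncomputable def spectralCDF (σ : ℝ → ℝ) (u : ℝ) : ℝ :=
  (1 - u) * σ u + ∫ v in (0:ℝ)..u, σ v

section SpectralMeasure

variable {σ : ℝ → ℝ} {Γ : Measure ℝ}

theorem spectralCDF_sub_le (hσ : MonotoneOn σ (Ico 0 1)) {a b : ℝ} (ha : 0 ≤ a) (hab : a ≤ b)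
    (hb : b < 1) (hgeom : 1 - a = 2 * (1 - b)) :
    spectralCDF σ b - spectralCDF σ a ≤ 2 * (1 - b) * (σ b - σ a) := by
  have hii : ∀ c ∈ Icc 0 b, ∀ d ∈ Icc 0 b, IntervalIntegrable σ volume c d := fun c hc d hd =>
    (hσ.mono ((uIcc_subset_Icc hc hd).trans (Icc_subset_Ico_right hb))).intervalIntegrable
  have h0 : (0:ℝ) ∈ Icc 0 b := ⟨le_rfl, ha.trans hab⟩
  have hb' : b ∈ Icc 0 b := ⟨ha.trans hab, le_rfl⟩
  have ha' : a ∈ Icc 0 b := ⟨ha, hab⟩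
  have hincr : ∫ v in a..b, σ v ≤ (b - a) * σ b := by
    simpa using intervalIntegral.integral_mono_on hab (hii a ha' b hb') intervalIntegrable_const
      fun v hv => hσ ⟨ha.trans hv.1, hv.2.trans_lt hb⟩ ⟨ha.trans hab, hb⟩ hv.2
  rw [show b - a = 1 - b by linarith] at hincr
  have hsplit := intervalIntegral.integral_add_adjacent_intervals (hii 0 h0 a ha') (hii a ha' b hb')
  unfold spectralCDF
  rw [← hsplit, hgeom]
  linarith

theorem measure_Ioc_le_spectralCDF_sub
    (hΓ : ∀ u ∈ Ico (0:ℝ) 1, Γ (Icc 0 u) = ENNReal.ofReal (spectralCDF σ u))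
    {a b : ℝ} (ha : 0 ≤ a) (hab : a ≤ b) (hb : b < 1) :
    Γ (Ioc a b) ≤ ENNReal.ofReal (spectralCDF σ b - spectralCDF σ a) := by
  have hunion := measure_union (μ := Γ) (s₁ := Icc 0 a)
    (disjoint_left.2 fun _ hx hx' => hx'.1.not_ge hx.2) (measurableSet_Ioc (b := b))
  rw [Icc_union_Ioc_eq_Icc ha hab, hΓ b ⟨ha.trans hab, hb⟩, hΓ a ⟨ha, hab.trans_lt hb⟩] at hunion
  refine (ENNReal.add_le_add_iff_left (a := ENNReal.ofReal (spectralCDF σ a))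
    ENNReal.ofReal_ne_top).1 ?_
  rw [← hunion]
  exact ENNReal.ofReal_add_le.trans_eq' (by rw [add_sub_cancel])

theorem monotone_one_sub_two_inv_pow : Monotone fun n : ℕ => 1 - (2⁻¹ : ℝ) ^ n :=
  fun _ _ hmn => sub_le_sub_left (pow_le_pow_of_le_one (by norm_num) (by norm_num) hmn) 1

theorem one_sub_two_inv_pow_mem_Ico (n : ℕ) : 1 - (2⁻¹ : ℝ) ^ n ∈ Ico 0 1 :=
  ⟨sub_nonneg.2 (pow_le_one₀ (by norm_num) (by norm_num)), sub_lt_self 1 (by positivity)⟩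

theorem Ico_subset_union_iUnion_Ioc :
    Ico (0:ℝ) 1 ⊆ {0} ∪ ⋃ n : ℕ, Ioc (1 - 2⁻¹ ^ n) (1 - 2⁻¹ ^ (n + 1)) := by
  rintro u ⟨hu0, hu1⟩
  rcases hu0.eq_or_lt with rfl | hpos
  · exact mem_union_left _ rfl
  obtain ⟨N, hN⟩ := exists_pow_lt_of_lt_one (sub_pos.2 hu1) (by norm_num : (2⁻¹ : ℝ) < 1)
  have hmem : u ∈ Ioc (1 - (2⁻¹ : ℝ) ^ 0) (1 - 2⁻¹ ^ N) := ⟨by simpa using hpos, by linarith⟩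
  obtain ⟨n, -, hn⟩ := mem_iUnion₂.1 (Ioc_subset_biUnion_Ioc N (fun n => 1 - (2⁻¹ : ℝ) ^ n) hmem)
  exact mem_union_right _ (mem_iUnion.2 ⟨n, hn⟩)

theorem setLIntegral_Ioc_inv_one_sub_le (hσ : MonotoneOn σ (Ico 0 1))
    (hΓ : ∀ u ∈ Ico (0:ℝ) 1, Γ (Icc 0 u) = ENNReal.ofReal (spectralCDF σ u)) (n : ℕ) :
    ∫⁻ u in Ioc (1 - 2⁻¹ ^ n) (1 - 2⁻¹ ^ (n + 1)), ENNReal.ofReal (1 - u)⁻¹ ∂Γ ≤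
      ENNReal.ofReal (2 * (σ (1 - 2⁻¹ ^ (n + 1)) - σ (1 - 2⁻¹ ^ n))) := by
  set a : ℝ := 1 - 2⁻¹ ^ n
  set b : ℝ := 1 - 2⁻¹ ^ (n + 1)
  have ha : a ∈ Ico 0 1 := one_sub_two_inv_pow_mem_Ico n
  have hb : b ∈ Ico 0 1 := one_sub_two_inv_pow_mem_Ico (n + 1)
  have hab : a ≤ b := monotone_one_sub_two_inv_pow n.le_succ
  have hb1 : 0 < 1 - b := sub_pos.2 hb.2
  have hgeom : 1 - a = 2 * (1 - b) := by simp only [a, b, pow_succ]; ring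
  calc ∫⁻ u in Ioc a b, ENNReal.ofReal (1 - u)⁻¹ ∂Γ
      ≤ ∫⁻ _ in Ioc a b, ENNReal.ofReal (1 - b)⁻¹ ∂Γ :=
        setLIntegral_mono measurable_const fun u hu =>
          ENNReal.ofReal_le_ofReal (inv_anti₀ hb1 (by linarith [hu.2]))
    _ = ENNReal.ofReal (1 - b)⁻¹ * Γ (Ioc a b) := setLIntegral_const _ _
    _ ≤ ENNReal.ofReal (1 - b)⁻¹ * ENNReal.ofReal (spectralCDF σ b - spectralCDF σ a) :=
        by gcongr; exact measure_Ioc_le_spectralCDF_sub hΓ ha.1 hab hb.2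
    _ = ENNReal.ofReal ((1 - b)⁻¹ * (spectralCDF σ b - spectralCDF σ a)) :=
        (ENNReal.ofReal_mul (inv_nonneg.2 hb1.le)).symm
    _ ≤ ENNReal.ofReal (2 * (σ b - σ a)) := by
        refine ENNReal.ofReal_le_ofReal ((inv_mul_le_iff₀ hb1).2 ?_)
        linarith [spectralCDF_sub_le hσ ha.1 hab hb.2 hgeom]

theorem integrable_inv_one_sub (hσ : MonotoneOn σ (Ico 0 1)) {M : ℝ}
    (hM : ∀ u ∈ Ico (0:ℝ) 1, σ u ≤ M) (hΓ : ∀ᵐ u ∂Γ, u ∈ Ico (0:ℝ) 1)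
    (hcdf : ∀ u ∈ Ico (0:ℝ) 1, Γ (Icc 0 u) = ENNReal.ofReal (spectralCDF σ u)) :
    Integrable (fun u => (1 - u)⁻¹) Γ := by
  have hnonneg : 0 ≤ᵐ[Γ] fun u => (1 - u)⁻¹ :=
    hΓ.mono fun u hu => inv_nonneg.2 (sub_nonneg.2 hu.2.le)
  refine ⟨(measurable_const.sub measurable_id).inv.aestronglyMeasurable,
    (hasFiniteIntegral_iff_ofReal hnonneg).2 ?_⟩
  have hatom : ∫⁻ u in {0}, ENNReal.ofReal (1 - u)⁻¹ ∂Γ < ⊤ := by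
    rw [lintegral_singleton, ← Icc_self, hcdf 0 ⟨le_rfl, one_pos⟩]
    exact ENNReal.mul_lt_top ENNReal.ofReal_lt_top ENNReal.ofReal_lt_top
  have htelescope : ∑' n : ℕ, ENNReal.ofReal (2 * (σ (1 - 2⁻¹ ^ (n + 1)) - σ (1 - 2⁻¹ ^ n))) ≤
      ENNReal.ofReal (2 * (M - σ 0)) := by
    refine ENNReal.tsum_le_of_sum_range_le fun N => ?_
    have hincr : ∀ n, 0 ≤ 2 * (σ (1 - 2⁻¹ ^ (n + 1)) - σ (1 - 2⁻¹ ^ n)) := fun n =>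
      mul_nonneg zero_le_two (sub_nonneg.2 (hσ (one_sub_two_inv_pow_mem_Ico n)
        (one_sub_two_inv_pow_mem_Ico (n + 1)) (monotone_one_sub_two_inv_pow n.le_succ)))
    rw [← ENNReal.ofReal_sum_of_nonneg fun n _ => hincr n, ← Finset.mul_sum,
      Finset.sum_range_sub (fun n => σ (1 - 2⁻¹ ^ n))]
    refine ENNReal.ofReal_le_ofReal ?_
    rw [pow_zero, sub_self]
    linarith [hM _ (one_sub_two_inv_pow_mem_Ico N)]
  calc ∫⁻ u, ENNReal.ofReal (1 - u)⁻¹ ∂Γ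
      = ∫⁻ u in Ico 0 1, ENNReal.ofReal (1 - u)⁻¹ ∂Γ := by
        rw [Measure.restrict_eq_self_of_ae_mem hΓ]
    _ ≤ ∫⁻ u in {0} ∪ ⋃ n : ℕ, Ioc (1 - 2⁻¹ ^ n) (1 - 2⁻¹ ^ (n + 1)),
          ENNReal.ofReal (1 - u)⁻¹ ∂Γ :=
        lintegral_mono_set Ico_subset_union_iUnion_Ioc
    _ ≤ ∫⁻ u in {0}, ENNReal.ofReal (1 - u)⁻¹ ∂Γ +
          ∑' n : ℕ, ∫⁻ u in Ioc (1 - 2⁻¹ ^ n) (1 - 2⁻¹ ^ (n + 1)), ENNReal.ofReal (1 - u)⁻¹ ∂Γ :=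
        (lintegral_union_le _ _ _).trans (add_le_add le_rfl (lintegral_iUnion_le _ _))
    _ ≤ ∫⁻ u in {0}, ENNReal.ofReal (1 - u)⁻¹ ∂Γ + ENNReal.ofReal (2 * (M - σ 0)) :=
        add_le_add le_rfl ((ENNReal.tsum_le_tsum
          (setLIntegral_Ioc_inv_one_sub_le hσ hcdf)).trans htelescope)
    _ < ⊤ := ENNReal.add_lt_top.2 ⟨hatom, ENNReal.ofReal_lt_top⟩

end SpectralMeasure

theorem ciInf_ratCast_eq {f : ℝ → ℝ} (hf : Continuous f) (hbdd : BddBelow (range f)) :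
    ⨅ q : ℚ, f q = ⨅ b, f b := by
  have hbddℚ : BddBelow (range fun q : ℚ => f q) := hbdd.mono (range_comp_subset_range _ _)
  refine le_antisymm (le_ciInf fun b => ?_) (le_ciInf fun q => ciInf_le hbdd _)
  exact Rat.denseRange_cast.induction_on b (isClosed_le continuous_const hf)
    fun q => ciInf_le hbddℚ q

theorem exists_measurable_lt_ciInf_add {α : Type*} [MeasurableSpace α] {s : Set α}
    (hs : MeasurableSet s) {g : α → ℝ → ℝ} (hmeas : ∀ b, Measurable fun u => g u b)
    (hcont : ∀ u ∈ s, Continuous (g u)) (hbdd : ∀ u ∈ s, BddBelow (range (g u)))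
    {ε : ℝ} (hε : 0 < ε) :
    ∃ β : α → ℝ, Measurable β ∧ ∀ u ∈ s, g u (β u) < (⨅ b, g u b) + ε := by
  classical
  let e : ℕ → ℚ := (Denumerable.eqv ℚ).symm
  let p : ℕ → α → Prop := fun n u => g u (e n) < (⨅ q : ℚ, g u q) + ε ∨ u ∉ s
  have hp : ∀ u, ∃ n, p n u := by
    intro u
    by_cases hu : u ∈ s
    · obtain ⟨q, hq⟩ := exists_lt_of_ciInf_lt (lt_add_of_pos_right (⨅ q : ℚ, g u q) hε)
      exact ⟨Denumerable.eqv ℚ q, Or.inl (by simpa [e] using hq)⟩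
    · exact ⟨0, Or.inr hu⟩
  refine ⟨fun u => e (Nat.find (hp u)), Measurable.find (f := fun n _ => (e n : ℝ))
    (fun _ => measurable_const) (fun n => ?_) hp, fun u hu => ?_⟩
  · exact (measurableSet_lt (hmeas _)
      ((Measurable.iInf fun q : ℚ => hmeas (q : ℝ)).add_const ε)).union hs.compl
  · rw [← ciInf_ratCast_eq (hcont u hu) (hbdd u hu)]
    exact (Nat.find_spec (hp u)).resolve_right (not_not.2 hu)

noncomputable def stopLoss {Ω : Type*} [MeasurableSpace Ω] (π : Measure Ω) (L : Ω → ℝ) (b : ℝ) :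
    ℝ :=
  ∫ ω, max (L ω - b) 0 ∂π

section StopLoss

variable {Ω : Type*} [MeasurableSpace Ω] {π : Measure Ω} {L : Ω → ℝ}

theorem stopLoss_nonneg (b : ℝ) : 0 ≤ stopLoss π L b :=
  integral_nonneg fun _ => le_max_right _ _

variable [IsProbabilityMeasure π]

theorem integrable_max_sub (hL : Integrable L π) (b : ℝ) :
    Integrable (fun ω => max (L ω - b) 0) π :=
  (hL.sub (integrable_const b)).pos_part

theorem integral_sub_le_stopLoss (hL : Integrable L π) (b : ℝ) :
    ∫ ω, L ω ∂π - b ≤ stopLoss π L b := by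
  have := integral_mono (f := fun ω => L ω - b) (hL.sub (integrable_const b))
    (integrable_max_sub hL b) fun ω => le_max_left (L ω - b) 0
  rwa [integral_sub hL (integrable_const b), integral_const, probReal_univ, one_smul] at this

theorem lipschitzWith_stopLoss (hL : Integrable L π) : LipschitzWith 1 (stopLoss π L) := by
  refine LipschitzWith.of_dist_le_mul fun b b' => ?_
  rw [NNReal.coe_one, one_mul, Real.dist_eq, stopLoss, stopLoss,
    ← integral_sub (integrable_max_sub hL b) (integrable_max_sub hL b')]
  have hle : ∀ ω, ‖max (L ω - b) 0 - max (L ω - b') 0‖ ≤ dist b b' := fun ω => by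
    rw [Real.norm_eq_abs, Real.dist_eq, abs_sub_comm b]
    simpa using abs_max_sub_max_le_abs (L ω - b) (L ω - b') 0
  simpa using norm_integral_le_of_norm_le_const (μ := π) (ae_of_all _ hle)

theorem add_stopLoss_eq_integral_max (hL : Integrable L π) (b : ℝ) :
    b + stopLoss π L b = ∫ ω, max (L ω) b ∂π := by
  have hmax : ∀ ω, max (L ω) b = b + max (L ω - b) 0 := fun ω => by
    rw [← max_add_add_left, add_sub_cancel, add_zero]
  simp_rw [hmax]
  rw [integral_add (integrable_const b) (integrable_max_sub hL b), integral_const, probReal_univ,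
    one_smul, stopLoss]

theorem tendsto_add_stopLoss_atBot (hL : Integrable L π) :
    Tendsto (fun b => b + stopLoss π L b) atBot (𝓝 (∫ ω, L ω ∂π)) := by
  simp_rw [add_stopLoss_eq_integral_max hL]
  refine tendsto_integral_filter_of_dominated_convergence (fun ω => |L ω|)
    (Eventually.of_forall fun b => (hL.sup (integrable_const b)).aestronglyMeasurable) ?_ hL.abs
    (ae_of_all _ fun ω => tendsto_const_nhds.congr' ?_)
  · filter_upwards [eventually_le_atBot 0] with b hb
    refine ae_of_all _ fun ω => ?_
    rw [Real.norm_eq_abs, abs_le]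
    exact ⟨(neg_abs_le _).trans (le_max_left _ _), max_le (le_abs_self _) (hb.trans (abs_nonneg _))⟩
  · filter_upwards [eventually_le_atBot (L ω)] with b hb
    exact (max_eq_left hb).symm

end StopLoss

noncomputable def esObjective {Ω : Type*} [MeasurableSpace Ω] (π : Measure Ω) (L : Ω → ℝ)
    (u b : ℝ) : ℝ :=
  b + (1 - u)⁻¹ * stopLoss π L b

-- Only meaningful for `u ∈ [0,1)`: elsewhere `esObjective π L u` is unbounded below and the
-- infimum takes the junk value `0`.
noncomputable def expectedShortfall {Ω : Type*} [MeasurableSpace Ω] (π : Measure Ω) (L : Ω → ℝ)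
    (u : ℝ) : ℝ :=
  ⨅ b, esObjective π L u b

section ExpectedShortfall

variable {Ω : Type*} [MeasurableSpace Ω] {π : Measure Ω} [IsProbabilityMeasure π] {L : Ω → ℝ}

theorem integral_le_esObjective (hL : Integrable L π) {u : ℝ} (hu : u ∈ Ico (0:ℝ) 1) (b : ℝ) :
    ∫ ω, L ω ∂π ≤ esObjective π L u b := by
  have hinv : 1 ≤ (1 - u)⁻¹ := (one_le_inv₀ (sub_pos.2 hu.2)).2 (by linarith [hu.1])
  calc ∫ ω, L ω ∂π ≤ b + stopLoss π L b := by linarith [integral_sub_le_stopLoss hL b]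
    _ ≤ b + (1 - u)⁻¹ * stopLoss π L b := by
        gcongr
        exact le_mul_of_one_le_left (stopLoss_nonneg b) hinv

theorem bddBelow_range_esObjective (hL : Integrable L π) {u : ℝ} (hu : u ∈ Ico (0:ℝ) 1) :
    BddBelow (range (esObjective π L u)) :=
  ⟨_, forall_mem_range.2 (integral_le_esObjective hL hu)⟩

theorem continuous_esObjective (hL : Integrable L π) (u : ℝ) : Continuous (esObjective π L u) :=
  continuous_id.add (continuous_const.mul (lipschitzWith_stopLoss hL).continuous)

theorem measurable_uncurry_esObjective (hL : Integrable L π) :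
    Measurable (Function.uncurry (esObjective π L)) :=
  measurable_snd.add ((measurable_const.sub measurable_fst).inv.mul
    ((lipschitzWith_stopLoss hL).continuous.measurable.comp measurable_snd))

theorem integral_le_expectedShortfall (hL : Integrable L π) {u : ℝ} (hu : u ∈ Ico (0:ℝ) 1) :
    ∫ ω, L ω ∂π ≤ expectedShortfall π L u :=
  le_ciInf (integral_le_esObjective hL hu)

theorem expectedShortfall_le_esObjective (hL : Integrable L π) {u : ℝ} (hu : u ∈ Ico (0:ℝ) 1)
    (b : ℝ) : expectedShortfall π L u ≤ esObjective π L u b :=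
  ciInf_le (bddBelow_range_esObjective hL hu) b

theorem expectedShortfall_zero (hL : Integrable L π) :
    expectedShortfall π L 0 = ∫ ω, L ω ∂π := by
  have h0 : (0:ℝ) ∈ Ico (0:ℝ) 1 := ⟨le_rfl, one_pos⟩
  refine le_antisymm (ge_of_tendsto' (tendsto_add_stopLoss_atBot hL) fun b => ?_)
    (integral_le_expectedShortfall hL h0)
  simpa [esObjective] using expectedShortfall_le_esObjective hL h0 b

variable {Γ : Measure ℝ}

theorem aestronglyMeasurable_expectedShortfall (hL : Integrable L π)
    (hΓ : ∀ᵐ u ∂Γ, u ∈ Ico (0:ℝ) 1) : AEStronglyMeasurable (expectedShortfall π L) Γ :=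
  (Measurable.iInf fun _ : ℚ => (measurable_uncurry_esObjective hL).comp
    (measurable_id.prodMk measurable_const)).aestronglyMeasurable.congr
    (hΓ.mono fun u hu => ciInf_ratCast_eq (continuous_esObjective hL u)
      (bddBelow_range_esObjective hL hu))

theorem integrable_expectedShortfall [IsFiniteMeasure Γ] (hL : Integrable L π)
    (hΓ : ∀ᵐ u ∂Γ, u ∈ Ico (0:ℝ) 1) (hinv : Integrable (fun u => (1 - u)⁻¹) Γ) :
    Integrable (expectedShortfall π L) Γ :=
  integrable_of_le_of_le (aestronglyMeasurable_expectedShortfall hL hΓ)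
    (hΓ.mono fun _ hu => integral_le_expectedShortfall hL hu)
    (hΓ.mono fun _ hu => expectedShortfall_le_esObjective hL hu 0) (integrable_const _)
    (by simpa [esObjective] using hinv.mul_const (stopLoss π L 0))

theorem integral_expectedShortfall_le [IsFiniteMeasure Γ] (hL : Integrable L π)
    (hΓ : ∀ᵐ u ∂Γ, u ∈ Ico (0:ℝ) 1) (hinv : Integrable (fun u => (1 - u)⁻¹) Γ) {β : ℝ → ℝ}
    (hβ : Integrable (fun u => esObjective π L u (β u)) Γ) :
    ∫ u, expectedShortfall π L u ∂Γ ≤ ∫ u, esObjective π L u (β u) ∂Γ :=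
  integral_mono_ae (integrable_expectedShortfall hL hΓ hinv) hβ
    (hΓ.mono fun _ hu => expectedShortfall_le_esObjective hL hu _)

theorem exists_measurable_integral_esObjective_le [IsProbabilityMeasure Γ] (hL : Integrable L π)
    (hΓ : ∀ᵐ u ∂Γ, u ∈ Ico (0:ℝ) 1) (hinv : Integrable (fun u => (1 - u)⁻¹) Γ) {ε : ℝ}
    (hε : 0 < ε) :
    ∃ β : ℝ → ℝ, Measurable β ∧ Integrable (fun u => esObjective π L u (β u)) Γ ∧
      ∫ u, esObjective π L u (β u) ∂Γ ≤ ∫ u, expectedShortfall π L u ∂Γ + ε := by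
  obtain ⟨β, hβ, hlt⟩ := exists_measurable_lt_ciInf_add measurableSet_Ico
    (fun b => (measurable_uncurry_esObjective hL).comp (measurable_id.prodMk measurable_const))
    (fun u _ => continuous_esObjective hL u) (fun _ hu => bddBelow_range_esObjective hL hu) hε
  have hES := integrable_expectedShortfall hL hΓ hinv
  have hESε : Integrable (fun u => expectedShortfall π L u + ε) Γ := hES.add (integrable_const ε)
  have hle : ∀ᵐ u ∂Γ, esObjective π L u (β u) ≤ expectedShortfall π L u + ε :=
    hΓ.mono fun u hu => (hlt u hu).le
  have hint : Integrable (fun u => esObjective π L u (β u)) Γ :=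
    integrable_of_le_of_le
      ((measurable_uncurry_esObjective hL).comp (measurable_id.prodMk hβ)).aestronglyMeasurable
      (hΓ.mono fun _ hu => expectedShortfall_le_esObjective hL hu _) hle hES hESε
  refine ⟨β, hβ, hint, ?_⟩
  calc ∫ u, esObjective π L u (β u) ∂Γ ≤ ∫ u, (expectedShortfall π L u + ε) ∂Γ :=
        integral_mono_ae hint hESε hle
    _ = ∫ u, expectedShortfall π L u ∂Γ + ε := by
        rw [integral_add hES (integrable_const ε), integral_const, probReal_univ, one_smul]

theorem sInf_integral_esObjective [IsProbabilityMeasure Γ] (hL : Integrable L π)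
    (hΓ : ∀ᵐ u ∂Γ, u ∈ Ico (0:ℝ) 1) (hinv : Integrable (fun u => (1 - u)⁻¹) Γ) :
    sInf {r : ℝ | ∃ β : ℝ → ℝ, Measurable β ∧ Integrable (fun u => esObjective π L u (β u)) Γ ∧
      r = ∫ u, esObjective π L u (β u) ∂Γ} = ∫ u, expectedShortfall π L u ∂Γ := by
  obtain ⟨β, hβ, hint, -⟩ := exists_measurable_integral_esObjective_le hL hΓ hinv one_pos
  refine csInf_eq_of_forall_ge_of_forall_gt_exists_lt ⟨_, β, hβ, hint, rfl⟩ ?_ fun w hw => ?_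
  · rintro r ⟨β, -, hβ, rfl⟩
    exact integral_expectedShortfall_le hL hΓ hinv hβ
  · obtain ⟨β, hβ, hint, hle⟩ :=
      exists_measurable_integral_esObjective_le hL hΓ hinv (half_pos (sub_pos.2 hw))
    exact ⟨_, ⟨β, hβ, hint, rfl⟩, by linarith⟩

theorem integral_esObjective_eq_iff [IsFiniteMeasure Γ] (hL : Integrable L π)
    (hΓ : ∀ᵐ u ∂Γ, u ∈ Ico (0:ℝ) 1) (hinv : Integrable (fun u => (1 - u)⁻¹) Γ) {β : ℝ → ℝ}
    (hβ : Integrable (fun u => esObjective π L u (β u)) Γ) :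
    ∫ u, esObjective π L u (β u) ∂Γ = ∫ u, expectedShortfall π L u ∂Γ ↔
      ∀ᵐ u ∂Γ, esObjective π L u (β u) = expectedShortfall π L u := by
  rw [eq_comm, integral_eq_iff_of_ae_le (integrable_expectedShortfall hL hΓ hinv) hβ
    (hΓ.mono fun _ hu => expectedShortfall_le_esObjective hL hu _)]
  exact ⟨EventuallyEq.symm, EventuallyEq.symm⟩

end ExpectedShortfall

theorem stmt_7_general {Ω : Type*} [MeasurableSpace Ω] (π : Measure Ω) [IsProbabilityMeasure π]
    (L : Ω → ℝ) (hL : Integrable L π)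
    -- the spectral function σ : bounded, nonnegative, increasing, ∫σ = 1
    (σ : ℝ → ℝ)
    (hσ_mono : MonotoneOn σ (Set.Ico (0:ℝ) 1))
    (hσ_bdd : ∃ M, ∀ u ∈ Set.Ico (0:ℝ) 1, σ u ≤ M)
    -- Γ_σ : the probability measure on [0,1) with distribution function (1-u)σ(u) + ∫_0^u σ(v)dv
    (Γ : Measure ℝ) [IsProbabilityMeasure Γ]
    (hΓ_supp : Γ (Set.Ico (0:ℝ) 1)ᶜ = 0)
    (hΓ_cdf : ∀ u ∈ Set.Ico (0:ℝ) 1,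
      Γ (Set.Icc 0 u) = ENNReal.ofReal ((1 - u) * σ u + ∫ v in (0:ℝ)..u, σ v))
    -- ES_{u,π}(L) = inf_b (b + (1-u)^{-1} E_π[(L-b)_+]), with ES_{0,π}(L) = E_π[L]
    (ES : ℝ → ℝ)
    (hES : ∀ u, ES u =
      sInf (Set.range fun b : ℝ => b + (1 - u)⁻¹ * ∫ ω, max (L ω - b) 0 ∂π)) :
    -- interchange of infimum and integral
    sInf {r : ℝ | ∃ β : ℝ → ℝ, Measurable β ∧
        Integrable (fun u => β u + (1 - u)⁻¹ * ∫ ω, max (L ω - β u) 0 ∂π) Γ ∧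
        r = ∫ u, (β u + (1 - u)⁻¹ * ∫ ω, max (L ω - β u) 0 ∂π) ∂Γ}
      = ∫ u, ES u ∂Γ ∧
    -- identification of the value
    (∫ u, ES u ∂Γ)
      = (Γ {(0:ℝ)}).toReal * (∫ ω, L ω ∂π) + ∫ u in ({(0:ℝ)}ᶜ), ES u ∂Γ ∧
    -- β is a minimizer iff β(u) minimizes b ↦ b + (1-u)⁻¹ E_π[(L-b)_+] for Γ-a.e. u
    (∀ β : ℝ → ℝ, Measurable β →
      Integrable (fun u => β u + (1 - u)⁻¹ * ∫ ω, max (L ω - β u) 0 ∂π) Γ →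
      ((∫ u, (β u + (1 - u)⁻¹ * ∫ ω, max (L ω - β u) 0 ∂π) ∂Γ = ∫ u, ES u ∂Γ) ↔
        ∀ᵐ u ∂Γ, β u + (1 - u)⁻¹ * ∫ ω, max (L ω - β u) 0 ∂π = ES u)) := by
  obtain ⟨M, hM⟩ := hσ_bdd
  have hΓ : ∀ᵐ u ∂Γ, u ∈ Ico (0:ℝ) 1 := mem_ae_iff.2 hΓ_supp
  have hinv : Integrable (fun u => (1 - u)⁻¹) Γ := integrable_inv_one_sub hσ_mono hM hΓ hΓ_cdf
  obtain rfl : ES = expectedShortfall π L := funext hES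
  refine ⟨sInf_integral_esObjective hL hΓ hinv, ?_,
    fun β _ hβ => integral_esObjective_eq_iff hL hΓ hinv hβ⟩
  rw [← integral_add_compl (measurableSet_singleton 0) (integrable_expectedShortfall hL hΓ hinv),
    Measure.restrict_singleton, integral_smul_measure, integral_dirac, expectedShortfall_zero hL,
    smul_eq_mul]

theorem stmt_7 {Ω : Type*} [MeasurableSpace Ω] (π : Measure Ω) [IsProbabilityMeasure π]
    (L : Ω → ℝ) (hLmeas : Measurable L) (hL : Integrable L π)
    -- the spectral function σ : bounded, nonnegative, increasing, ∫σ = 1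
    (σ : ℝ → ℝ)
    (hσ_nonneg : ∀ u ∈ Set.Ico (0:ℝ) 1, 0 ≤ σ u)
    (hσ_mono : MonotoneOn σ (Set.Ico (0:ℝ) 1))
    (hσ_bdd : ∃ M, ∀ u ∈ Set.Ico (0:ℝ) 1, σ u ≤ M)
    (hσ_one : ∫ u in (0:ℝ)..1, σ u = 1)
    -- Γ_σ : the probability measure on [0,1) with distribution function (1-u)σ(u) + ∫_0^u σ(v)dv
    (Γ : Measure ℝ) [IsProbabilityMeasure Γ]
    (hΓ_supp : Γ (Set.Ico (0:ℝ) 1)ᶜ = 0)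
    (hΓ_cdf : ∀ u ∈ Set.Ico (0:ℝ) 1,
      Γ (Set.Icc 0 u) = ENNReal.ofReal ((1 - u) * σ u + ∫ v in (0:ℝ)..u, σ v))
    -- ES_{u,π}(L) = inf_b (b + (1-u)^{-1} E_π[(L-b)_+]), with ES_{0,π}(L) = E_π[L]
    (ES : ℝ → ℝ)
    (hES : ∀ u, ES u =
      sInf (Set.range fun b : ℝ => b + (1 - u)⁻¹ * ∫ ω, max (L ω - b) 0 ∂π)) :
    -- interchange of infimum and integral
    sInf {r : ℝ | ∃ β : ℝ → ℝ, Measurable β ∧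
        Integrable (fun u => β u + (1 - u)⁻¹ * ∫ ω, max (L ω - β u) 0 ∂π) Γ ∧
        r = ∫ u, (β u + (1 - u)⁻¹ * ∫ ω, max (L ω - β u) 0 ∂π) ∂Γ}
      = ∫ u, ES u ∂Γ ∧
    -- identification of the value
    (∫ u, ES u ∂Γ)
      = (Γ {(0:ℝ)}).toReal * (∫ ω, L ω ∂π) + ∫ u in ({(0:ℝ)}ᶜ), ES u ∂Γ ∧
    -- β is a minimizer iff β(u) minimizes b ↦ b + (1-u)⁻¹ E_π[(L-b)_+] for Γ-a.e. u
    (∀ β : ℝ → ℝ, Measurable β →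
      Integrable (fun u => β u + (1 - u)⁻¹ * ∫ ω, max (L ω - β u) 0 ∂π) Γ →
      ((∫ u, (β u + (1 - u)⁻¹ * ∫ ω, max (L ω - β u) 0 ∂π) ∂Γ = ∫ u, ES u ∂Γ) ↔
        ∀ᵐ u ∂Γ, β u + (1 - u)⁻¹ * ∫ ω, max (L ω - β u) 0 ∂π = ES u)) :=
  stmt_7_general π L hL σ hσ_mono hσ_bdd Γ hΓ_supp hΓ_cdf ES hES
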